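/- arXiv:2203.04862 — 4 statements merged into one kernel-verified Lean document; each statement's English description precedes it below -/
import Mathlib

section
/- Let N be a quantum channel on d×d complex matrices and O a Hermitian d×d matrix. There exists a Hermitian-preserving trace-scaling linear map D on d×d matrices such that the composite M = D∘N satisfies M†(O) = O if and only if O lies in the image of the set of Hermitian d×d matrices under the adjoint map N†. -/
open Matrix
open scoped Kronecker ComplexOrder

abbrev MatC (n : Type*) := Matrix n n ℂ

/-- A linear map on matrices is Hermitian-preserving if it sends Hermitian
matrices to Hermitian matrices. -/
def IsHermitianPreserving {n : Type*} [Fintype n] [DecidableEq n]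
    (M : MatC n →ₗ[ℂ] MatC n) : Prop :=
  ∀ X : MatC n, X.IsHermitian → (M X).IsHermitian

/-- A linear map on matrices is trace-scaling if it scales the trace by a fixed
real factor. -/
def IsTraceScaling {n : Type*} [Fintype n] [DecidableEq n]
    (M : MatC n →ₗ[ℂ] MatC n) : Prop :=
  ∃ p : ℝ, ∀ X : MatC n, (M X).trace = (p : ℂ) * X.trace

/-- The Choi matrix `J_M = Σ_{i,j} |i⟩⟨j| ⊗ M(|i⟩⟨j|)` of a linear map on matrices. -/
def choi {n : Type*} [Fintype n] [DecidableEq n]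
    (M : MatC n →ₗ[ℂ] MatC n) : Matrix (n × n) (n × n) ℂ :=
  Matrix.of fun p q => M (Matrix.single p.1 q.1 1) p.2 q.2

/-- A quantum channel is a completely positive (positive semidefinite Choi matrix)
trace-preserving linear map. -/
def IsQuantumChannel {n : Type*} [Fintype n] [DecidableEq n]
    (M : MatC n →ₗ[ℂ] MatC n) : Prop :=
  (choi M).PosSemidef ∧ ∀ X : MatC n, (M X).trace = X.trace

/-- `Md` is the adjoint of `M` with respect to the Hilbert-Schmidt inner product
`⟨A, B⟩ = tr[A† B]`. -/
def IsAdjointPair {n : Type*} [Fintype n] [DecidableEq n]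
    (M Md : MatC n →ₗ[ℂ] MatC n) : Prop :=
  ∀ A B : MatC n, (Aᴴ * M B).trace = ((Md A)ᴴ * B).trace

/-- A density matrix: positive semidefinite with unit trace. -/
def IsDensityMatrix {n : Type*} [Fintype n] [DecidableEq n] (ρ : MatC n) : Prop :=
  ρ.PosSemidef ∧ ρ.trace = 1

/-- The Hermitian matrices as a real submodule of the complex matrices. -/
noncomputable def hermSubmodule (n : Type*) [Fintype n] [DecidableEq n] :
    Submodule ℝ (MatC n) :=
  selfAdjoint.submodule ℝ (MatC n)

/-- The image of the Hermitian matrices under a (complex-)linear map, as a real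
submodule. -/
noncomputable def hermitianImage {n : Type*} [Fintype n] [DecidableEq n]
    (M : MatC n →ₗ[ℂ] MatC n) : Submodule ℝ (MatC n) :=
  (hermSubmodule n).map (M.restrictScalars ℝ)

/-! `(D ∘ N)† = N† ∘ D†`, and the adjoint of a Hermitian-preserving map is again
Hermitian-preserving, so a fixed point `O = M† O` is `N†` of the Hermitian matrix `D† O`.
Conversely let `O = N† Q`. If `O` is a multiple of the identity, `D = id` works, because the
adjoint of a trace-preserving map is unital. Otherwise the traceless part of `O`, suitably
normalised, is a traceless Hermitian `A` with `tr (A O) = 1`, and the rank-one map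
`D X = tr (Q X) • A` is Hermitian-preserving, trace-annihilating, and has
`D† O = tr (A O) • Q = Q`.
-/

section

variable {n : Type*} [Fintype n] [DecidableEq n]

theorem IsHermitianPreserving.map_conjTranspose {M : MatC n →ₗ[ℂ] MatC n}
    (hM : IsHermitianPreserving M) (X : MatC n) : M Xᴴ = (M X)ᴴ := by
  have hsa (a : selfAdjoint (MatC n)) : (M a)ᴴ = M a := hM a a.2
  have hstar (a : selfAdjoint (MatC n)) : (a : MatC n)ᴴ = a := a.2
  rw [← realPart_add_I_smul_imaginaryPart X]
  simp only [conjTranspose_add, conjTranspose_smul, map_add, map_smul, hsa, hstar,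
    Complex.star_def, Complex.conj_I]

noncomputable def hsAdjoint (M : MatC n →ₗ[ℂ] MatC n) : MatC n →ₗ[ℂ] MatC n where
  toFun A := of fun i j => star (Aᴴ * M (single i j 1)).trace
  map_add' A B := by ext; simp [add_mul]
  map_smul' c A := by ext; simp

theorem isAdjointPair_hsAdjoint (M : MatC n →ₗ[ℂ] MatC n) :
    IsAdjointPair M (hsAdjoint M) := by
  intro A B
  induction B using Matrix.induction_on' with
  | h_zero => simp
  | h_add B C hB hC => simp [mul_add, hB, hC]
  | h_std_basis i j x =>
    rw [show single i j x = x • single i j 1 by simp [smul_single]]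
    simp only [map_smul, Matrix.mul_smul, trace_smul, smul_eq_mul, trace_mul_single]
    simp [hsAdjoint]

noncomputable def hsRankOne (Q A : MatC n) : MatC n →ₗ[ℂ] MatC n :=
  (traceLinearMap n ℂ ℂ ∘ₗ LinearMap.mulLeft ℂ Qᴴ).smulRight A

@[simp]
theorem hsRankOne_apply (Q A X : MatC n) : hsRankOne Q A X = (Qᴴ * X).trace • A := rfl

namespace IsAdjointPair

variable {M Md K Kd : MatC n →ₗ[ℂ] MatC n}

theorem comp (hK : IsAdjointPair K Kd) (hM : IsAdjointPair M Md) :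
    IsAdjointPair (K ∘ₗ M) (Md ∘ₗ Kd) :=
  fun A B => (hK A (M B)).trans (hM (Kd A) B)

theorem unique {Md' : MatC n →ₗ[ℂ] MatC n} (h : IsAdjointPair M Md)
    (h' : IsAdjointPair M Md') : Md = Md' := by
  ext1 A
  rw [← conjTranspose_inj, ext_iff_trace_mul_right]
  exact fun B => (h A B).symm.trans (h' A B)

theorem map_one (h : IsAdjointPair M Md) (hM : ∀ X, (M X).trace = X.trace) : Md 1 = 1 := by
  rw [← conjTranspose_inj, ext_iff_trace_mul_right]
  intro B
  rw [← h, conjTranspose_one, one_mul, one_mul, hM]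

theorem isHermitianPreserving (h : IsAdjointPair M Md) (hM : IsHermitianPreserving M) :
    IsHermitianPreserving Md := by
  intro A hA
  refine ext_iff_trace_mul_right.mpr fun B => ?_
  calc ((Md A)ᴴ * B).trace = (A * M B).trace := by rw [← h A B, hA.eq]
    _ = star ((A * M Bᴴ).trace) := by
      rw [hM.map_conjTranspose, ← trace_conjTranspose, conjTranspose_mul,
        conjTranspose_conjTranspose, hA.eq, trace_mul_comm]
    _ = (Md A * B).trace := by
      rw [← conjTranspose_conjTranspose (Md A * B), trace_conjTranspose, conjTranspose_mul,
        trace_mul_comm Bᴴ, ← h A Bᴴ, hA.eq]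

end IsAdjointPair

theorem isAdjointPair_hsRankOne (Q A : MatC n) :
    IsAdjointPair (hsRankOne Q A) (hsRankOne A Q) := by
  intro X B
  simp only [hsRankOne_apply, Matrix.mul_smul, trace_smul, conjTranspose_smul, Matrix.smul_mul,
    smul_eq_mul, ← trace_conjTranspose, conjTranspose_mul, conjTranspose_conjTranspose]
  ring

theorem isHermitianPreserving_hsRankOne {Q A : MatC n} (hQ : Q.IsHermitian)
    (hA : A.IsHermitian) :
    IsHermitianPreserving (hsRankOne Q A) := by
  intro X hX
  rw [IsHermitian, hsRankOne_apply, conjTranspose_smul, hA.eq, ← trace_conjTranspose,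
    conjTranspose_mul, hX.eq, conjTranspose_conjTranspose, hQ.eq, trace_mul_comm]

theorem isTraceScaling_hsRankOne (Q : MatC n) {A : MatC n} (hA : A.trace = 0) :
    IsTraceScaling (hsRankOne Q A) :=
  ⟨0, fun X => by simp [hA]⟩

theorem exists_isHermitian_trace_eq_zero_trace_mul_eq_one {O : MatC n} (hO : O.IsHermitian)
    (hO1 : ∀ c : ℂ, O ≠ c • 1) :
    ∃ A : MatC n, A.IsHermitian ∧ A.trace = 0 ∧ (A * O).trace = 1 := by
  have hn : (Fintype.card n : ℂ) ≠ 0 := by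
    refine Nat.cast_ne_zero.mpr fun h => hO1 0 ?_
    have := Fintype.card_eq_zero_iff.mp h
    exact Subsingleton.elim _ _
  set c := O.trace / Fintype.card n
  have hc : IsSelfAdjoint c :=
    (show IsSelfAdjoint O.trace by rw [IsSelfAdjoint, ← trace_conjTranspose, hO.eq]).div
      (.natCast _)
  set H := O - c • 1
  have hH : H.IsHermitian := hO.sub (isHermitian_one.smul hc)
  have hHtr : H.trace = 0 := by
    simp only [H, c, trace_sub, trace_smul, trace_one, smul_eq_mul, div_mul_cancel₀ _ hn,
      sub_self]
  set r := (H * H).trace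
  have hr0 : r ≠ 0 := by
    have : (Hᴴ * H).trace ≠ 0 :=
      trace_conjTranspose_mul_self_eq_zero_iff.not.mpr (sub_ne_zero.mpr (hO1 c))
    rwa [hH.eq] at this
  have hr : IsSelfAdjoint r := by
    rw [IsSelfAdjoint, ← trace_conjTranspose, conjTranspose_mul, hH.eq]
  refine ⟨r⁻¹ • H, hH.smul (by rw [IsSelfAdjoint, star_inv₀, hr.star_eq]),
    by rw [trace_smul, hHtr, smul_zero], ?_⟩
  rw [← sub_add_cancel O (c • 1), Matrix.smul_mul, trace_smul, Matrix.mul_add, trace_add,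
    Matrix.mul_smul, mul_one, trace_smul, hHtr, smul_zero, add_zero, smul_eq_mul,
    inv_mul_cancel₀ hr0]

end

/-- **Theorem 1** (Necessary and sufficient condition for information preservation).
Given a quantum channel `N` (with Hilbert-Schmidt adjoint `Nd`) and an observable `O`,
there is a Hermitian-preserving trace-scaling map `D` such that the adjoint of
`M = D ∘ N` fixes `O` if and only if `O` lies in the image of the Hermitian matrices
under `N†`. -/
theorem stmt1 (d : ℕ) (N Nd : MatC (Fin d) →ₗ[ℂ] MatC (Fin d))
    (hN : IsQuantumChannel N) (hNd : IsAdjointPair N Nd)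
    (O : MatC (Fin d)) (hO : O.IsHermitian) :
    (∃ D Md : MatC (Fin d) →ₗ[ℂ] MatC (Fin d),
        IsHermitianPreserving D ∧ IsTraceScaling D ∧
        IsAdjointPair (D ∘ₗ N) Md ∧ Md O = O) ↔
      ∃ Q : MatC (Fin d), Q.IsHermitian ∧ Nd Q = O := by
  constructor
  · rintro ⟨D, Md, hD, -, hDN, hMd⟩
    have hDd := isAdjointPair_hsAdjoint D
    refine ⟨hsAdjoint D O, hDd.isHermitianPreserving hD O hO, ?_⟩
    rwa [hDN.unique (hDd.comp hNd)] at hMd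
  · rintro ⟨Q, hQ, rfl⟩
    by_cases hscalar : ∃ c : ℂ, Nd Q = c • 1
    · obtain ⟨c, hc⟩ := hscalar
      refine ⟨.id, Nd, fun X hX => hX, ⟨1, by simp⟩, by simpa using hNd, ?_⟩
      rw [hc, map_smul, hNd.map_one hN.2]
    · obtain ⟨A, hA, hAtr, hAO⟩ :=
        exists_isHermitian_trace_eq_zero_trace_mul_eq_one hO (not_exists.mp hscalar)
      refine ⟨hsRankOne Q A, Nd ∘ₗ hsRankOne A Q, isHermitianPreserving_hsRankOne hQ hA,
        isTraceScaling_hsRankOne Q hAtr, (isAdjointPair_hsRankOne Q A).comp hNd, ?_⟩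
      rw [LinearMap.comp_apply, hsRankOne_apply, hA.eq, hAO, one_smul]
end

section
/- Let D be a Hermitian-preserving trace-scaling linear map on d×d complex matrices, and define γ_min(D) as the infimum of Σ_j |c_j| over all decompositions D = Σ_j c_j·D_j into finitely many quantum channels D_j with real coefficients c_j. Then γ_min(D) equals the infimum of |c_1| + |c_2| over all decompositions D = c_1·D_1 + c_2·D_2 into exactly two quantum channels D_1, D_2 with real coefficients c_1, c_2; moreover, any decomposition achieving γ_min(D) can be converted, without increasing Σ_j |c_j|, into a two-channel decomposition in which c_1 ≥ 0 and c_2 ≤ 0. -/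
open Matrix
open scoped Kronecker ComplexOrder

/-- The set of costs `Σ_j |c_j|` of decompositions of `D` into finitely many quantum
channels with real coefficients. -/
def decompCosts {n : Type*} [Fintype n] [DecidableEq n]
    (D : MatC n →ₗ[ℂ] MatC n) : Set ℝ :=
  {s | ∃ (m : ℕ) (c : Fin m → ℝ) (Dj : Fin m → (MatC n →ₗ[ℂ] MatC n)),
    (∀ j, IsQuantumChannel (Dj j)) ∧ D = ∑ j, (c j : ℂ) • Dj j ∧ s = ∑ j, |c j|}

/-- The set of costs `|c₁| + |c₂|` of decompositions of `D` into exactly two quantum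
channels with real coefficients. -/
def twoDecompCosts {n : Type*} [Fintype n] [DecidableEq n]
    (D : MatC n →ₗ[ℂ] MatC n) : Set ℝ :=
  {s | ∃ (c₁ c₂ : ℝ) (D₁ D₂ : MatC n →ₗ[ℂ] MatC n),
    IsQuantumChannel D₁ ∧ IsQuantumChannel D₂ ∧
    D = (c₁ : ℂ) • D₁ + (c₂ : ℂ) • D₂ ∧ s = |c₁| + |c₂|}

/-!
Split every coefficient as `c = c⁺ - c⁻`, so that `|c| = c⁺ + c⁻`. Channels form a convex set,
hence the nonnegative combinations `Σ c_j⁺ D_j` and `Σ c_j⁻ D_j` are `(Σ c_j⁺) • D₁` and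
`(Σ c_j⁻) • D₂` for channels `D₁, D₂`: every decomposition yields a two-channel one of the same
cost with `c₁ ≥ 0 ≥ c₂`, and the two infima agree.
-/

section Decompositions

variable {n : Type*} [Fintype n] [DecidableEq n]

lemma choi_sum_smul {ι : Type*} (s : Finset ι) (w : ι → ℂ) (M : ι → (MatC n →ₗ[ℂ] MatC n)) :
    choi (∑ i ∈ s, w i • M i) = ∑ i ∈ s, w i • choi (M i) := by
  ext
  simp [choi, LinearMap.sum_apply, Matrix.sum_apply]

lemma choi_id : choi (LinearMap.id : MatC n →ₗ[ℂ] MatC n) =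
    vecMulVec (fun p : n × n => if p.1 = p.2 then 1 else 0)
      (star fun p : n × n => if p.1 = p.2 then 1 else 0) := by
  ext ⟨i, j⟩ ⟨k, l⟩
  simp only [choi, of_apply, LinearMap.id_apply, single_apply, vecMulVec_apply, Pi.star_apply]
  split_ifs <;> simp_all

lemma isQuantumChannel_id : IsQuantumChannel (LinearMap.id : MatC n →ₗ[ℂ] MatC n) :=
  ⟨by rw [choi_id]; exact posSemidef_vecMulVec_self_star _, fun _ => rfl⟩

lemma IsQuantumChannel.sum_smul {ι : Type*} {s : Finset ι} {w : ι → ℝ}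
    {M : ι → (MatC n →ₗ[ℂ] MatC n)} (hM : ∀ i ∈ s, IsQuantumChannel (M i))
    (hw₀ : ∀ i ∈ s, 0 ≤ w i) (hw₁ : ∑ i ∈ s, w i = 1) :
    IsQuantumChannel (∑ i ∈ s, (w i : ℂ) • M i) := by
  refine ⟨?_, fun X => ?_⟩
  · rw [choi_sum_smul]
    exact posSemidef_sum s fun i hi =>
      (hM i hi).1.smul (Complex.zero_le_real.mpr (hw₀ i hi))
  · simp only [LinearMap.sum_apply, LinearMap.smul_apply, trace_sum, trace_smul, smul_eq_mul]
    rw [Finset.sum_congr rfl fun i hi => by rw [(hM i hi).2 X], ← Finset.sum_mul,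
      ← Complex.ofReal_sum, hw₁, Complex.ofReal_one, one_mul]

lemma exists_isQuantumChannel_sum_smul_eq_smul {ι : Type*} {s : Finset ι} {w : ι → ℝ}
    {M : ι → (MatC n →ₗ[ℂ] MatC n)} (hM : ∀ i ∈ s, IsQuantumChannel (M i))
    (hw : ∀ i ∈ s, 0 ≤ w i) :
    ∃ E, IsQuantumChannel E ∧ ∑ i ∈ s, (w i : ℂ) • M i = ((∑ i ∈ s, w i : ℝ) : ℂ) • E := by
  rcases (Finset.sum_nonneg hw).eq_or_lt with hS | hS
  · have hw₀ : ∀ i ∈ s, w i = 0 := (Finset.sum_eq_zero_iff_of_nonneg hw).mp hS.symm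
    refine ⟨LinearMap.id, isQuantumChannel_id, ?_⟩
    rw [← hS, Complex.ofReal_zero, zero_smul]
    exact Finset.sum_eq_zero fun i hi => by rw [hw₀ i hi, Complex.ofReal_zero, zero_smul]
  · refine ⟨∑ i ∈ s, ((w i / ∑ j ∈ s, w j : ℝ) : ℂ) • M i,
      IsQuantumChannel.sum_smul hM (fun i hi => div_nonneg (hw i hi) hS.le) ?_, ?_⟩
    · rw [← Finset.sum_div, div_self hS.ne']
    · rw [Finset.smul_sum]
      refine Finset.sum_congr rfl fun i _ => ?_
      rw [smul_smul, ← Complex.ofReal_mul, mul_div_cancel₀ _ hS.ne']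

theorem exists_two_channel_decomposition {ι : Type*} (s : Finset ι) (c : ι → ℝ)
    {M : ι → (MatC n →ₗ[ℂ] MatC n)} (hM : ∀ i ∈ s, IsQuantumChannel (M i)) :
    ∃ (c₁ c₂ : ℝ) (D₁ D₂ : MatC n →ₗ[ℂ] MatC n), IsQuantumChannel D₁ ∧ IsQuantumChannel D₂ ∧
      ∑ i ∈ s, (c i : ℂ) • M i = (c₁ : ℂ) • D₁ + (c₂ : ℂ) • D₂ ∧
      |c₁| + |c₂| = ∑ i ∈ s, |c i| ∧ 0 ≤ c₁ ∧ c₂ ≤ 0 := by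
  obtain ⟨D₁, hD₁, h₁⟩ :=
    exists_isQuantumChannel_sum_smul_eq_smul (w := fun i => (c i)⁺) hM fun i _ => posPart_nonneg _
  obtain ⟨D₂, hD₂, h₂⟩ :=
    exists_isQuantumChannel_sum_smul_eq_smul (w := fun i => (c i)⁻) hM fun i _ => negPart_nonneg _
  have hpos : 0 ≤ ∑ i ∈ s, (c i)⁺ := Finset.sum_nonneg fun i _ => posPart_nonneg _
  have hneg : 0 ≤ ∑ i ∈ s, (c i)⁻ := Finset.sum_nonneg fun i _ => negPart_nonneg _
  refine ⟨_, -∑ i ∈ s, (c i)⁻, D₁, D₂, hD₁, hD₂, ?_, ?_, hpos, neg_nonpos.mpr hneg⟩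
  · calc ∑ i ∈ s, (c i : ℂ) • M i
        = ∑ i ∈ s, (((c i)⁺ - (c i)⁻ : ℝ) : ℂ) • M i := by simp_rw [posPart_sub_negPart]
      _ = ∑ i ∈ s, (((c i)⁺ : ℝ) : ℂ) • M i - ∑ i ∈ s, (((c i)⁻ : ℝ) : ℂ) • M i := by
          rw [← Finset.sum_sub_distrib]
          exact Finset.sum_congr rfl fun i _ => by push_cast; module
      _ = _ := by rw [h₁, h₂]; push_cast; module
  · rw [abs_neg, abs_of_nonneg hpos, abs_of_nonneg hneg, ← Finset.sum_add_distrib]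
    simp_rw [posPart_add_negPart]

lemma twoDecompCosts_subset_decompCosts (D : MatC n →ₗ[ℂ] MatC n) :
    twoDecompCosts D ⊆ decompCosts D := by
  rintro _ ⟨c₁, c₂, D₁, D₂, h₁, h₂, rfl, rfl⟩
  exact ⟨2, ![c₁, c₂], ![D₁, D₂], Fin.forall_fin_two.mpr ⟨h₁, h₂⟩, by simp [Fin.sum_univ_two],
    by simp [Fin.sum_univ_two]⟩

lemma sInf_decompCosts_eq_sInf_twoDecompCosts (D : MatC n →ₗ[ℂ] MatC n) :
    sInf (decompCosts D) = sInf (twoDecompCosts D) := by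
  refine csInf_eq_csInf_of_forall_exists_le ?_
    fun s hs => ⟨s, twoDecompCosts_subset_decompCosts D hs, le_rfl⟩
  rintro _ ⟨m, c, Dj, hQ, rfl, rfl⟩
  obtain ⟨c₁, c₂, D₁, D₂, h₁, h₂, hD, hcost, -⟩ :=
    exists_two_channel_decomposition Finset.univ c fun j _ => hQ j
  exact ⟨_, ⟨c₁, c₂, D₁, D₂, h₁, h₂, hD, rfl⟩, hcost.le⟩

end Decompositions

theorem stmt12_general (d : ℕ) (D : MatC (Fin d) →ₗ[ℂ] MatC (Fin d)) :
    sInf (decompCosts D) = sInf (twoDecompCosts D) ∧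
    ∀ (m : ℕ) (c : Fin m → ℝ) (Dj : Fin m → (MatC (Fin d) →ₗ[ℂ] MatC (Fin d))),
      (∀ j, IsQuantumChannel (Dj j)) → D = ∑ j, (c j : ℂ) • Dj j →
      (∑ j, |c j|) = sInf (decompCosts D) →
      ∃ (c₁ c₂ : ℝ) (D₁ D₂ : MatC (Fin d) →ₗ[ℂ] MatC (Fin d)),
        IsQuantumChannel D₁ ∧ IsQuantumChannel D₂ ∧
        D = (c₁ : ℂ) • D₁ + (c₂ : ℂ) • D₂ ∧
        |c₁| + |c₂| ≤ ∑ j, |c j| ∧ 0 ≤ c₁ ∧ c₂ ≤ 0 := by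
  refine ⟨sInf_decompCosts_eq_sInf_twoDecompCosts D, fun m c Dj hQ hD _ => ?_⟩
  obtain ⟨c₁, c₂, D₁, D₂, h₁, h₂, hD₁₂, hcost, hc₁, hc₂⟩ :=
    exists_two_channel_decomposition Finset.univ c fun j _ => hQ j
  exact ⟨c₁, c₂, D₁, D₂, h₁, h₂, hD.trans hD₁₂, hcost.le, hc₁, hc₂⟩

/-- The simulation cost `γ_min(D)` of an HPTS map, defined as an infimum over
arbitrary finite decompositions into channels, is achieved among two-channel
decompositions; moreover any decomposition achieving `γ_min(D)` can be converted,
without increasing the cost, into a two-channel decomposition with `c₁ ≥ 0 ≥ c₂`. -/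
theorem stmt12 (d : ℕ) (D : MatC (Fin d) →ₗ[ℂ] MatC (Fin d))
    (hHP : IsHermitianPreserving D) (hTS : IsTraceScaling D) :
    sInf (decompCosts D) = sInf (twoDecompCosts D) ∧
    ∀ (m : ℕ) (c : Fin m → ℝ) (Dj : Fin m → (MatC (Fin d) →ₗ[ℂ] MatC (Fin d))),
      (∀ j, IsQuantumChannel (Dj j)) → D = ∑ j, (c j : ℂ) • Dj j →
      (∑ j, |c j|) = sInf (decompCosts D) →
      ∃ (c₁ c₂ : ℝ) (D₁ D₂ : MatC (Fin d) →ₗ[ℂ] MatC (Fin d)),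
        IsQuantumChannel D₁ ∧ IsQuantumChannel D₂ ∧
        D = (c₁ : ℂ) • D₁ + (c₂ : ℂ) • D₂ ∧
        |c₁| + |c₂| ≤ ∑ j, |c j| ∧ 0 ≤ c₁ ∧ c₂ ≤ 0 :=
  stmt12_general d D
end

section
/- Let 0 ≤ ε < 1, 0 ≤ p ≤ 1, and let N be the single-qubit generalized amplitude damping channel N(ρ) = Σ_{i=0}^{3} E_i ρ E_i† with Kraus operators E_0 = √p·diag(1, √(1−ε)), E_1 = √p·√ε·|0⟩⟨1|, E_2 = √(1−p)·diag(√(1−ε), 1), E_3 = √(1−p)·√ε·|1⟩⟨0|. Let O be the Pauli matrix X or Y. Define the linear map D on 2×2 matrices by D(σ) = (1/(2√(1−ε)))·O·tr[σ·O]; equivalently, D = c_1·D_1 + c_2·D_2 with c_1 = −c_2 = 1/(2√(1−ε)) and channels D_1, D_2 whose Choi matrices are J_{D_1} = (1/2)O^T⊗O + (1/2)I⊗I and J_{D_2} = −(1/2)O^T⊗O + (1/2)I⊗I. Then D_1 and D_2 are quantum channels and tr[D(N(ρ))·O] = tr[ρ·O] for every 2×2 matrix ρ, so D is a valid retriever with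 cost |c_1| + |c_2| = 1/√(1−ε). -/
/-!
The retriever is `c • measurePrepare O` with `measurePrepare O σ = tr[σ O] • O`, split as
`c • D₊ - c • D₋` where `D± = (measurePrepare 1 ± measurePrepare O)/2`. The Choi matrix of `D±`
is `(1 ± Oᵀ ⊗ O)/2`, and `Oᵀ ⊗ O` is a Hermitian involution, so it is a projection, hence
positive; `tr O = 0` makes `D±` trace preserving. In the Heisenberg picture the generalized
amplitude damping channel multiplies every matrix with zero diagonal, such as `X` and `Y`, by
`√(1 - ε)`, so `tr[D(N ρ) O] = c √(1 - ε) tr[ρ O] tr[O²] = tr[ρ O]`.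
-/

open Matrix
open scoped Kronecker ComplexOrder

/-- The linear map `ρ ↦ Σ_i E_i ρ E_i†` given by a finite family of Kraus operators. -/
noncomputable def krausMap {n : Type*} [Fintype n] {k : ℕ} (E : Fin k → Matrix n n ℂ) :
    MatC n →ₗ[ℂ] MatC n where
  toFun ρ := ∑ i, E i * ρ * (E i)ᴴ
  map_add' ρ σ := by
    simp [Matrix.mul_add, Matrix.add_mul, Finset.sum_add_distrib]
  map_smul' c ρ := by
    simp [Matrix.mul_smul, Matrix.smul_mul, Finset.smul_sum]

/-- The Pauli X matrix. -/
def PauliX : MatC (Fin 2) := !![0, 1; 1, 0]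

/-- The Pauli Y matrix. -/
def PauliY : MatC (Fin 2) := !![0, -Complex.I; Complex.I, 0]

/-- The Pauli Z matrix. -/
def PauliZ : MatC (Fin 2) := !![1, 0; 0, -1]

/-- The Kraus operators of the single-qubit generalized amplitude damping channel
with damping factor `ε` and temperature indicator `p`. -/
noncomputable def gadKraus (p ε : ℝ) : Fin 4 → MatC (Fin 2) :=
  ![(Real.sqrt p : ℂ) • !![1, 0; 0, (Real.sqrt (1 - ε) : ℂ)],
    ((Real.sqrt p * Real.sqrt ε : ℝ) : ℂ) • !![0, 1; 0, 0],
    (Real.sqrt (1 - p) : ℂ) • !![(Real.sqrt (1 - ε) : ℂ), 0; 0, 1],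
    ((Real.sqrt (1 - p) * Real.sqrt ε : ℝ) : ℂ) • !![0, 0; 1, 0]]

/-- The single-qubit generalized amplitude damping channel. -/
noncomputable def gad (p ε : ℝ) : MatC (Fin 2) →ₗ[ℂ] MatC (Fin 2) :=
  krausMap (gadKraus p ε)

/-- The set of costs `|c₁| + |c₂|` over all two-channel retrievers for the shadow
information `tr[ρ O]` through the noisy channel `N`: real numbers `c₁, c₂` and
quantum channels `D₁, D₂` such that `D = c₁·D₁ + c₂·D₂` satisfies
`tr[D(N(ρ))·O] = tr[ρ·O]` for every density matrix `ρ`. -/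
def retrCosts {n : Type*} [Fintype n] [DecidableEq n]
    (N : MatC n →ₗ[ℂ] MatC n) (O : MatC n) : Set ℝ :=
  {s | ∃ (c₁ c₂ : ℝ) (D₁ D₂ : MatC n →ₗ[ℂ] MatC n),
    IsQuantumChannel D₁ ∧ IsQuantumChannel D₂ ∧
    (∀ ρ : MatC n, IsDensityMatrix ρ →
      ((((c₁ : ℂ) • D₁ + (c₂ : ℂ) • D₂) (N ρ)) * O).trace = (ρ * O).trace) ∧
    s = |c₁| + |c₂|}

section MatrixMaps

variable {n : Type*} [Fintype n]

theorem choi_add [DecidableEq n] (M N : MatC n →ₗ[ℂ] MatC n) :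
    choi (M + N) = choi M + choi N := rfl

theorem choi_smul [DecidableEq n] (c : ℂ) (M : MatC n →ₗ[ℂ] MatC n) :
    choi (c • M) = c • choi M := rfl

noncomputable def measurePrepare (O : MatC n) : MatC n →ₗ[ℂ] MatC n where
  toFun σ := (σ * O).trace • O
  map_add' σ τ := by simp only [Matrix.add_mul, trace_add, add_smul]
  map_smul' c σ := by
    simp only [Matrix.smul_mul, trace_smul, smul_eq_mul, mul_smul, RingHom.id_apply]

@[simp]
theorem measurePrepare_apply (O σ : MatC n) : measurePrepare O σ = (σ * O).trace • O := rfl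

theorem choi_measurePrepare [DecidableEq n] (O : MatC n) :
    choi (measurePrepare O) = Oᵀ ⊗ₖ O := by
  ext ⟨i, j⟩ ⟨k, l⟩
  simp [choi, trace_single_mul]

/-- `(1 + K)/2` is an orthogonal projection `P`, hence equal to `Pᴴ * P`. -/
theorem posSemidef_half_one_add [DecidableEq n] {K : MatC n}
    (hK : K.IsHermitian) (hKK : K * K = 1) : ((1 / 2 : ℂ) • (1 + K)).PosSemidef := by
  set P := (1 / 2 : ℂ) • (1 + K)
  have hP : Pᴴ = P := by
    simp [P, conjTranspose_add, hK.eq]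
  have hPP : P * P = P := by
    simp only [P, Matrix.smul_mul, Matrix.mul_smul, Matrix.add_mul, Matrix.mul_add,
      Matrix.one_mul, Matrix.mul_one, hKK]
    module
  simpa [hP, hPP] using posSemidef_conjTranspose_mul_self P

theorem trace_krausMap_mul {k : ℕ} (E : Fin k → MatC n) (ρ O : MatC n) :
    (krausMap E ρ * O).trace = (ρ * ∑ i, (E i)ᴴ * O * E i).trace := by
  simp only [krausMap, LinearMap.coe_mk, AddHom.coe_mk, Finset.sum_mul, Finset.mul_sum,
    trace_sum]
  refine Finset.sum_congr rfl fun i _ => ?_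
  simp only [Matrix.mul_assoc]
  rw [trace_mul_comm (E i)]
  simp only [Matrix.mul_assoc]

structure IsTracelessHermitianInvolution [DecidableEq n] (O : MatC n) : Prop where
  isHermitian : O.IsHermitian
  mul_self : O * O = 1
  trace_eq_zero : O.trace = 0

end MatrixMaps

noncomputable def retrieverBranch (O : MatC (Fin 2)) (s : ℂ) :
    MatC (Fin 2) →ₗ[ℂ] MatC (Fin 2) :=
  (s / 2) • measurePrepare O + (1 / 2 : ℂ) • measurePrepare 1

theorem choi_retrieverBranch (O : MatC (Fin 2)) (s : ℂ) :
    choi (retrieverBranch O s) =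
      (s / 2) • (Oᵀ ⊗ₖ O) + (1 / 2 : ℂ) • ((1 : MatC (Fin 2)) ⊗ₖ 1) := by
  simp only [retrieverBranch, choi_add, choi_smul, choi_measurePrepare, transpose_one]

theorem IsTracelessHermitianInvolution.isQuantumChannel_retrieverBranch {O : MatC (Fin 2)}
    (hO : IsTracelessHermitianInvolution O) {s : ℂ} (hs : s = 1 ∨ s = -1) :
    IsQuantumChannel (retrieverBranch O s) := by
  constructor
  · have hs_star : star s = s := by rcases hs with rfl | rfl <;> simp
    have hss : s * s = 1 := by rcases hs with rfl | rfl <;> norm_num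
    have hK : (s • (Oᵀ ⊗ₖ O)).IsHermitian := by
      rw [IsHermitian, conjTranspose_smul, conjTranspose_kronecker, hs_star,
        conjTranspose_transpose_eq_transpose_conjTranspose, hO.isHermitian.eq]
    have hKK : (s • (Oᵀ ⊗ₖ O)) * (s • (Oᵀ ⊗ₖ O)) = 1 := by
      rw [Matrix.smul_mul, Matrix.mul_smul, smul_smul, hss, one_smul, ← mul_kronecker_mul,
        ← transpose_mul, hO.mul_self, transpose_one, one_kronecker_one]
    convert posSemidef_half_one_add hK hKK using 1
    rw [choi_retrieverBranch, one_kronecker_one]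
    module
  · intro σ
    simp only [retrieverBranch, LinearMap.add_apply, LinearMap.smul_apply, measurePrepare_apply,
      Matrix.mul_one, trace_add, trace_smul, hO.trace_eq_zero, smul_eq_mul, mul_zero, trace_one,
      Fintype.card_fin, Nat.cast_ofNat, zero_add]
    ring

theorem gadKraus_dual_of_diag_eq_zero (p ε : ℝ) (hp0 : 0 ≤ p) (hp1 : p ≤ 1) (O : MatC (Fin 2))
    (h0 : O 0 0 = 0) (h1 : O 1 1 = 0) :
    ∑ i, (gadKraus p ε i)ᴴ * O * gadKraus p ε i = (Real.sqrt (1 - ε) : ℂ) • O := by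
  have hp : (Real.sqrt p : ℂ) * Real.sqrt p = p := by
    rw [← Complex.ofReal_mul, Real.mul_self_sqrt hp0]
  have hq : (Real.sqrt (1 - p) : ℂ) * Real.sqrt (1 - p) = 1 - p := by
    rw [← Complex.ofReal_mul, Real.mul_self_sqrt (by linarith)]
    push_cast
    ring
  ext i j
  fin_cases i <;> fin_cases j <;>
    simp only [gadKraus, smul_of, smul_cons, smul_eq_mul, mul_one, mul_zero, smul_empty,
      Complex.ofReal_mul, Fin.zero_eta, Fin.isValue, Fin.mk_one, Fin.sum_univ_four, cons_val_zero,
      cons_val_one, cons_val, Matrix.add_apply, Matrix.mul_apply, conjTranspose_apply, of_apply,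
      cons_val', cons_val_fin_one, RCLike.star_def, Fin.sum_univ_two, Complex.conj_ofReal, map_zero,
      map_mul, zero_mul, add_zero, zero_add, h0, h1, Finset.sum_const_zero, Matrix.smul_apply]
  · linear_combination (Real.sqrt (1 - ε) : ℂ) * O 0 1 * (hp + hq)
  · linear_combination (Real.sqrt (1 - ε) : ℂ) * O 1 0 * (hp + hq)

theorem trace_gad_mul_of_diag_eq_zero (p ε : ℝ) (hp0 : 0 ≤ p) (hp1 : p ≤ 1) {O : MatC (Fin 2)}
    (h0 : O 0 0 = 0) (h1 : O 1 1 = 0) (ρ : MatC (Fin 2)) :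
    (gad p ε ρ * O).trace = Real.sqrt (1 - ε) * (ρ * O).trace := by
  rw [gad, trace_krausMap_mul, gadKraus_dual_of_diag_eq_zero p ε hp0 hp1 O h0 h1, Matrix.mul_smul,
    trace_smul, smul_eq_mul]

theorem isTracelessHermitianInvolution_pauliX : IsTracelessHermitianInvolution PauliX where
  isHermitian := by ext i j; fin_cases i <;> fin_cases j <;> simp [PauliX]
  mul_self := by ext i j; fin_cases i <;> fin_cases j <;> simp [PauliX]
  trace_eq_zero := by simp [PauliX, trace]

theorem isTracelessHermitianInvolution_pauliY : IsTracelessHermitianInvolution PauliY where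
  isHermitian := by ext i j; fin_cases i <;> fin_cases j <;> simp [PauliY]
  mul_self := by ext i j; fin_cases i <;> fin_cases j <;> simp [PauliY]
  trace_eq_zero := by simp [PauliY, trace]

theorem stmt13_general (p ε : ℝ) (hp0 : 0 ≤ p) (hp1 : p ≤ 1) (hε1 : ε < 1)
    (O : MatC (Fin 2)) (hO : O = PauliX ∨ O = PauliY) :
    ∃ D₁ D₂ : MatC (Fin 2) →ₗ[ℂ] MatC (Fin 2),
      IsQuantumChannel D₁ ∧ IsQuantumChannel D₂ ∧
      choi D₁ = (1 / 2 : ℂ) • (Oᵀ ⊗ₖ O) +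
        (1 / 2 : ℂ) • ((1 : MatC (Fin 2)) ⊗ₖ (1 : MatC (Fin 2))) ∧
      choi D₂ = -((1 / 2 : ℂ) • (Oᵀ ⊗ₖ O)) +
        (1 / 2 : ℂ) • ((1 : MatC (Fin 2)) ⊗ₖ (1 : MatC (Fin 2))) ∧
      ∃ c₁ c₂ : ℝ, c₁ = 1 / (2 * Real.sqrt (1 - ε)) ∧ c₂ = -c₁ ∧
        (∀ σ : MatC (Fin 2),
          ((c₁ : ℂ) • D₁ + (c₂ : ℂ) • D₂) σ =
            ((1 / (2 * Real.sqrt (1 - ε)) : ℝ) : ℂ) • ((σ * O).trace • O)) ∧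
        (∀ ρ : MatC (Fin 2),
          ((((c₁ : ℂ) • D₁ + (c₂ : ℂ) • D₂) (gad p ε ρ)) * O).trace = (ρ * O).trace) ∧
        |c₁| + |c₂| = 1 / Real.sqrt (1 - ε) := by
  have hObs : IsTracelessHermitianInvolution O := by
    rcases hO with rfl | rfl
    exacts [isTracelessHermitianInvolution_pauliX, isTracelessHermitianInvolution_pauliY]
  have hdiag : O 0 0 = 0 ∧ O 1 1 = 0 := by
    rcases hO with rfl | rfl <;> simp [PauliX, PauliY]
  have hsqrt : 0 < Real.sqrt (1 - ε) := Real.sqrt_pos.2 (by linarith)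
  set c := 1 / (2 * Real.sqrt (1 - ε))
  have hD : (c : ℂ) • retrieverBranch O 1 + ((-c : ℝ) : ℂ) • retrieverBranch O (-1) =
      (c : ℂ) • measurePrepare O := by
    ext σ : 1
    simp only [retrieverBranch, LinearMap.add_apply, LinearMap.smul_apply, Complex.ofReal_neg]
    module
  refine ⟨retrieverBranch O 1, retrieverBranch O (-1),
    hObs.isQuantumChannel_retrieverBranch (.inl rfl),
    hObs.isQuantumChannel_retrieverBranch (.inr rfl),
    choi_retrieverBranch O 1, by rw [choi_retrieverBranch, neg_div, neg_smul],
    c, -c, rfl, rfl, fun σ => by rw [hD]; rfl, fun ρ => ?_, ?_⟩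
  · rw [hD, LinearMap.smul_apply, measurePrepare_apply, Matrix.smul_mul, Matrix.smul_mul,
      trace_smul, trace_smul, hObs.mul_self, trace_one,
      trace_gad_mul_of_diag_eq_zero p ε hp0 hp1 hdiag.1 hdiag.2]
    simp only [c, smul_eq_mul, Fintype.card_fin]
    push_cast
    field_simp
  · rw [abs_neg, ← two_mul, abs_of_pos (by positivity)]
    simp only [c]
    field_simp

/-- The explicit retriever `D(σ) = (1/(2√(1−ε)))·tr[σO]·O = c₁·D₁ + c₂·D₂` (with the
stated Choi matrices) is a valid retriever for the observable `O ∈ {X, Y}` through the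
generalized amplitude damping channel, with cost `|c₁| + |c₂| = 1/√(1−ε)`. -/
theorem stmt13 (p ε : ℝ) (hp0 : 0 ≤ p) (hp1 : p ≤ 1) (hε0 : 0 ≤ ε) (hε1 : ε < 1)
    (O : MatC (Fin 2)) (hO : O = PauliX ∨ O = PauliY) :
    ∃ D₁ D₂ : MatC (Fin 2) →ₗ[ℂ] MatC (Fin 2),
      IsQuantumChannel D₁ ∧ IsQuantumChannel D₂ ∧
      choi D₁ = (1 / 2 : ℂ) • (Oᵀ ⊗ₖ O) +
        (1 / 2 : ℂ) • ((1 : MatC (Fin 2)) ⊗ₖ (1 : MatC (Fin 2))) ∧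
      choi D₂ = -((1 / 2 : ℂ) • (Oᵀ ⊗ₖ O)) +
        (1 / 2 : ℂ) • ((1 : MatC (Fin 2)) ⊗ₖ (1 : MatC (Fin 2))) ∧
      ∃ c₁ c₂ : ℝ, c₁ = 1 / (2 * Real.sqrt (1 - ε)) ∧ c₂ = -c₁ ∧
        (∀ σ : MatC (Fin 2),
          ((c₁ : ℂ) • D₁ + (c₂ : ℂ) • D₂) σ =
            ((1 / (2 * Real.sqrt (1 - ε)) : ℝ) : ℂ) • ((σ * O).trace • O)) ∧
        (∀ ρ : MatC (Fin 2),
          ((((c₁ : ℂ) • D₁ + (c₂ : ℂ) • D₂) (gad p ε ρ)) * O).trace = (ρ * O).trace) ∧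
        |c₁| + |c₂| = 1 / Real.sqrt (1 - ε) :=
  stmt13_general p ε hp0 hp1 hε1 O hO
end

section
/- Let O be a nonzero Hermitian d×d complex matrix with rank k < d and trace t ≠ 0, let P be the orthogonal projection onto the support (column space) of O and P⊥ = I − P the projection onto its kernel, and let Q be any Hermitian d×d matrix. Define the linear map E on d×d matrices by E(·) = (Q/t)·tr[P(·)P] + (k(I−Q)/(t(d−k)))·tr[P⊥(·)P⊥]. Then E is Hermitian-preserving, E(O) = Q, and E(I) = (k/t)·I (so E is unit-scaling). -/
open Matrix
open scoped Kronecker ComplexOrder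

/-!
`P` fixes the range of `O`, so `P O P = O` and `P⊥ O P⊥ = 0`, whence `E(O) = Q`.
An idempotent matrix has trace equal to its rank, so `tr P = k` and `tr P⊥ = d - k`;
hence both terms of `E(I)` carry the coefficient `k / t` and add up to `(k / t) (Q + (I - Q))`.
All scalars involved are real because `O`, `P` and `X` are Hermitian.
-/

namespace Matrix

theorem trace_eq_rank_of_isIdempotentElem {n K : Type*} [Fintype n] [DecidableEq n] [Field K]
    {P : Matrix n n K} (hP : IsIdempotentElem P) : P.trace = P.rank := by
  have hP' : IsIdempotentElem (toLin' P) := hP.map toLinAlgEquiv'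
  rw [← trace_toLin'_eq, (LinearMap.IsIdempotentElem.isProj_range _ hP').trace, rank]
  rfl

theorem mul_eq_self_of_range_le {m n R : Type*} [Fintype m] [Fintype n] [DecidableEq m]
    [CommRing R] {P : Matrix n n R} {A : Matrix n m R} (hP : IsIdempotentElem P)
    (hA : LinearMap.range A.mulVecLin ≤ LinearMap.range P.mulVecLin) : P * A = A := by
  refine ext_of_mulVec_single fun j => ?_
  obtain ⟨v, hv⟩ := hA ⟨Pi.single j 1, rfl⟩
  rw [mulVecLin_apply, mulVecLin_apply] at hv
  rw [← mulVec_mulVec, ← hv, mulVec_mulVec, hP.eq]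

theorem IsHermitian.isSelfAdjoint_trace {n R : Type*} [Fintype n] [AddCommMonoid R]
    [StarAddMonoid R] {A : Matrix n n R} (hA : A.IsHermitian) : IsSelfAdjoint A.trace := by
  rw [IsSelfAdjoint, ← trace_conjTranspose, hA.eq]

theorem IsHermitian.isSelfAdjoint_trace_mul_mul {n R : Type*} [Fintype n] [CommRing R]
    [StarRing R] {P X : Matrix n n R} (hP : P.IsHermitian) (hX : X.IsHermitian) :
    IsSelfAdjoint (P * X * P).trace := by
  have h := isHermitian_conjTranspose_mul_mul P hX
  rw [hP.eq] at h
  exact h.isSelfAdjoint_trace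

end Matrix

theorem stmt18_general (d k : ℕ) (O Q P : MatC (Fin d))
    (hO : O.IsHermitian) (hrank : O.rank = k) (hkd : k < d)
    (ht0 : O.trace ≠ 0) (hQ : Q.IsHermitian)
    (hPproj : P * P = P) (hPH : P.IsHermitian)
    (hPsupp : LinearMap.range P.mulVecLin = LinearMap.range O.mulVecLin)
    (E : MatC (Fin d) →ₗ[ℂ] MatC (Fin d))
    (hE : ∀ X : MatC (Fin d), E X =
      (O.trace)⁻¹ • ((P * X * P).trace • Q) +
      ((k : ℂ) / (O.trace * ((d : ℂ) - (k : ℂ)))) •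
        (((1 - P) * X * (1 - P)).trace • (1 - Q))) :
    IsHermitianPreserving E ∧ E O = Q ∧ E 1 = ((k : ℂ) / O.trace) • 1 := by
  have hPidem : IsIdempotentElem P := hPproj
  have hPO : P * O = O := mul_eq_self_of_range_le hPidem hPsupp.ge
  have hOP : O * P = O := by
    simpa only [conjTranspose_mul, hO.eq, hPH.eq] using congrArg conjTranspose hPO
  have htrP : P.trace = k := by
    rw [trace_eq_rank_of_isIdempotentElem hPidem, rank, hPsupp, ← rank, hrank]
  have ht : IsSelfAdjoint O.trace := hO.isSelfAdjoint_trace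
  refine ⟨fun X hX => ?_, ?_, ?_⟩
  · have hc : IsSelfAdjoint ((k : ℂ) / (O.trace * ((d : ℂ) - (k : ℂ)))) :=
      (IsSelfAdjoint.natCast k).div
        (ht.mul ((IsSelfAdjoint.natCast d).sub (IsSelfAdjoint.natCast k)))
    have hP' : (1 - P).IsHermitian := isHermitian_one.sub hPH
    rw [hE X]
    exact (ht.inv₀.smul ((hPH.isSelfAdjoint_trace_mul_mul hX).smul hQ)).add
      (hc.smul ((hP'.isSelfAdjoint_trace_mul_mul hX).smul (isHermitian_one.sub hQ)))
  · have hP'O : (1 - P) * O = 0 := by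
      rw [← hPO, ← Matrix.mul_assoc, hPidem.one_sub_mul_self, Matrix.zero_mul]
    rw [hE O, hPO, hOP, hP'O, Matrix.zero_mul, trace_zero, zero_smul, smul_zero, add_zero,
      smul_smul, inv_mul_cancel₀ ht0, one_smul]
  · have hdk : (d : ℂ) - k ≠ 0 := sub_ne_zero.mpr (by exact_mod_cast hkd.ne')
    have hcoeff : (k : ℂ) / (O.trace * (d - k)) * (d - k) = k / O.trace := by
      field_simp
    rw [hE 1, Matrix.mul_one, Matrix.mul_one, hPproj, hPidem.one_sub.eq, trace_sub, trace_one,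
      htrP, Fintype.card_fin, smul_smul, smul_smul, inv_mul_eq_div, hcoeff, ← smul_add,
      add_sub_cancel]

/-- Case 1 construction in the proof of Theorem 1: for a nonzero Hermitian observable
`O` with rank `k < d` and trace `t ≠ 0`, with `P` the orthogonal projection onto the
support of `O` (`P⊥ = 1 − P`), the map
`E(X) = (Q/t)·tr[P X P] + (k(I−Q)/(t(d−k)))·tr[P⊥ X P⊥]`
is Hermitian-preserving, satisfies `E(O) = Q`, and is unit-scaling with
`E(I) = (k/t)·I`. -/
theorem stmt18 (d k : ℕ) (O Q P : MatC (Fin d))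
    (hO : O.IsHermitian) (hO0 : O ≠ 0) (hrank : O.rank = k) (hkd : k < d)
    (ht0 : O.trace ≠ 0) (hQ : Q.IsHermitian)
    (hPproj : P * P = P) (hPH : P.IsHermitian)
    (hPsupp : LinearMap.range P.mulVecLin = LinearMap.range O.mulVecLin)
    (E : MatC (Fin d) →ₗ[ℂ] MatC (Fin d))
    (hE : ∀ X : MatC (Fin d), E X =
      (O.trace)⁻¹ • ((P * X * P).trace • Q) +
      ((k : ℂ) / (O.trace * ((d : ℂ) - (k : ℂ)))) •
        (((1 - P) * X * (1 - P)).trace • (1 - Q))) :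
    IsHermitianPreserving E ∧ E O = Q ∧ E 1 = ((k : ℂ) / O.trace) • 1 :=
  stmt18_general d k O Q P hO hrank hkd ht0 hQ hPproj hPH hPsupp E hE
end
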